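/- Assume (F0)-(F2) and (F4), and for each ε > 0 let u_ε : [0,T] → X be a C² solution of ε² A ü_ε(t) + ε B u̇_ε(t) + ∇ₓF(t, u_ε(t)) = 0 on [0,T], with ‖u_ε(0)‖ ≤ R and ε‖u̇_ε(0)‖ ≤ R for all ε > 0. Then there exists a constant C > 0, independent of ε, such that for all ε > 0 and all t ∈ [0,T]: (i) ‖u_ε(t)‖ ≤ C; (ii) ε‖u̇_ε(t)‖ ≤ C; (iii) ε²‖ü_ε(t)‖ ≤ C; (iv) ε ∫_0^T ‖u̇_ε(r)‖² dr ≤ C. -/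

import Mathlib

/-!
Energy method. Along a solution `u = u_ε` the energy `E = ε²/2 ⟪u̇, A u̇⟫ + F(t, u)` satisfies
`Ė = ∂ₜF(t, u) - ε ⟪u̇, B u̇⟫ ≤ C₁ (E + c)` with `c = C₂ / C₁`, so by Grönwall `E + c` stays below
`(E(0) + c) e^{C₁ T}`, a bound independent of `ε` because the initial energy is controlled by `R`.
The kinetic part of `E` gives (ii). Grönwall in `t` alone, forwards and backwards, turns the bound
on `F(t₀, u(t₀))` into one on `sup_t |F(t, u(t₀))|`, so (i) follows from (F1). Then (iii) is read
off the equation, `∇ₓF` being bounded on compact subsets of `[0,T] × X`, and (iv) is the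
dissipation `ε ⟪u̇, B u̇⟫` integrated over `[0,T]`.
-/

open Set Filter Topology MeasureTheory
open scoped RealInnerProductSpace

section Coercive

variable {X : Type*} [NormedAddCommGroup X] [InnerProductSpace ℝ X]

theorem exists_pos_mul_sq_norm_le_inner_apply [FiniteDimensional ℝ X] (A : X →L[ℝ] X)
    (hA : ∀ x, x ≠ 0 → 0 < ⟪x, A x⟫) : ∃ c > 0, ∀ x, c * ‖x‖ ^ 2 ≤ ⟪x, A x⟫ := by
  rcases subsingleton_or_nontrivial X with hX | hX
  · exact ⟨1, one_pos, fun x => by simp [Subsingleton.elim x 0]⟩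
  obtain ⟨y, hy, hmin⟩ := (isCompact_sphere (0 : X) 1).exists_isMinOn
    (NormedSpace.sphere_nonempty.2 zero_le_one)
    (by fun_prop : Continuous fun x : X => ⟪x, A x⟫).continuousOn
  have hy1 : ‖y‖ = 1 := by simpa using hy
  refine ⟨⟪y, A y⟫, hA y (norm_ne_zero_iff.1 (by simp [hy1])), fun x => ?_⟩
  rcases eq_or_ne x 0 with rfl | hx
  · simp
  have hx' : 0 < ‖x‖ := norm_pos_iff.2 hx
  have h : ⟪y, A y⟫ ≤ ⟪‖x‖⁻¹ • x, A (‖x‖⁻¹ • x)⟫ := hmin (by simp [norm_smul, hx'.ne'])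
  rw [map_smul, real_inner_smul_left, real_inner_smul_right] at h
  have : ⟪y, A y⟫ * ‖x‖ ^ 2 ≤ ‖x‖⁻¹ * (‖x‖⁻¹ * ⟪x, A x⟫) * ‖x‖ ^ 2 := by gcongr
  field_simp at this
  linarith

theorem mul_norm_le_norm_apply_of_coercive {A : X →L[ℝ] X} {c : ℝ}
    (hA : ∀ x, c * ‖x‖ ^ 2 ≤ ⟪x, A x⟫) (x : X) : c * ‖x‖ ≤ ‖A x‖ := by
  rcases eq_or_ne x 0 with rfl | hx
  · simp
  refine le_of_mul_le_mul_right ?_ (norm_pos_iff.2 hx)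
  calc c * ‖x‖ * ‖x‖ = c * ‖x‖ ^ 2 := by ring
    _ ≤ ⟪x, A x⟫ := hA x
    _ ≤ ‖x‖ * ‖A x‖ := real_inner_le_norm _ _
    _ = ‖A x‖ * ‖x‖ := mul_comm _ _

theorem mul_norm_le_sqrt_of_coercive {A : X →L[ℝ] X} {c ε K : ℝ} {w : X} (hc : 0 < c)
    (hA : ∀ x, c * ‖x‖ ^ 2 ≤ ⟪x, A x⟫) (hK : ε ^ 2 / 2 * ⟪w, A w⟫ ≤ K) :
    ε * ‖w‖ ≤ √(2 * K / c) := by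
  refine Real.le_sqrt_of_sq_le ((le_div_iff₀ hc).2 ?_)
  nlinarith [mul_le_mul_of_nonneg_left (hA w) (sq_nonneg ε)]

theorem sq_mul_norm_le_of_add_add_eq_zero {A B : X →L[ℝ] X} {c ε K G : ℝ} {z w g : X}
    (hc : 0 < c) (hA : ∀ x, c * ‖x‖ ^ 2 ≤ ⟪x, A x⟫) (hε : 0 ≤ ε)
    (h : ε ^ 2 • A z + ε • B w + g = 0) (hw : ε * ‖w‖ ≤ K) (hg : ‖g‖ ≤ G) :
    ε ^ 2 * ‖z‖ ≤ (‖B‖ * K + G) / c := by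
  have hz : ε ^ 2 • A z = -(ε • B w + g) := eq_neg_of_add_eq_zero_left (by rwa [← add_assoc])
  rw [le_div_iff₀ hc]
  calc ε ^ 2 * ‖z‖ * c = ε ^ 2 * (c * ‖z‖) := by ring
    _ ≤ ε ^ 2 * ‖A z‖ := by gcongr; exact mul_norm_le_norm_apply_of_coercive hA z
    _ = ‖ε • B w + g‖ := by
        rw [← norm_neg (ε • B w + g), ← hz, norm_smul, Real.norm_of_nonneg (by positivity)]
    _ ≤ ε * (‖B‖ * ‖w‖) + ‖g‖ := by
        grw [norm_add_le, norm_smul, Real.norm_of_nonneg hε, B.le_opNorm]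
    _ ≤ ‖B‖ * K + G := by nlinarith [norm_nonneg B]

end Coercive

section Gronwall

variable {f f' : ℝ → ℝ} {a b K : ℝ}

theorem antitoneOn_mul_exp_neg_of_deriv_le
    (hf : ∀ s ∈ Icc a b, HasDerivWithinAt f (f' s) (Icc a b) s)
    (hf' : ∀ s ∈ Ioo a b, f' s ≤ K * f s) :
    AntitoneOn (fun r => f r * Real.exp (-K * r)) (Icc a b) := by
  have hexp (s : ℝ) : HasDerivAt (fun r => Real.exp (-K * r)) (Real.exp (-K * s) * -K) s := by
    simpa using ((hasDerivAt_id s).const_mul (-K)).exp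
  refine antitoneOn_of_hasDerivWithinAt_nonpos (convex_Icc a b)
    (fun s hs => ((hf s hs).mul (hexp s).hasDerivWithinAt).continuousWithinAt)
    (f' := fun s => (f' s - K * f s) * Real.exp (-K * s)) (fun s hs => ?_) (fun s hs => ?_)
  · rw [interior_Icc] at hs ⊢
    exact (((hf s (Ioo_subset_Icc_self hs)).mono Ioo_subset_Icc_self).mul
      (hexp s).hasDerivWithinAt).congr_deriv (by ring)
  · rw [interior_Icc] at hs
    exact mul_nonpos_of_nonpos_of_nonneg (by linarith [hf' s hs]) (Real.exp_pos _).le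

theorem le_mul_exp_of_deriv_le (hf : ∀ s ∈ Icc a b, HasDerivWithinAt f (f' s) (Icc a b) s)
    (hf' : ∀ s ∈ Ioo a b, f' s ≤ K * f s) (hK : 0 ≤ K) (ha : 0 ≤ f a) {t : ℝ}
    (ht : t ∈ Icc a b) : f t ≤ f a * Real.exp (K * (b - a)) := by
  have h := antitoneOn_mul_exp_neg_of_deriv_le hf hf' ⟨le_rfl, ht.1.trans ht.2⟩ ht ht.1
  calc f t = f t * Real.exp (-K * t) * Real.exp (K * t) := by
        rw [mul_assoc, ← Real.exp_add]; simp
    _ ≤ f a * Real.exp (-K * a) * Real.exp (K * t) := by gcongr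
    _ = f a * Real.exp (K * (t - a)) := by
        rw [mul_assoc, ← Real.exp_add]; congr 2; ring
    _ ≤ f a * Real.exp (K * (b - a)) := by gcongr; exact ht.2

theorem le_mul_exp_of_abs_deriv_le (hf : ∀ s ∈ Icc a b, HasDerivWithinAt f (f' s) (Icc a b) s)
    (hf' : ∀ s ∈ Ioo a b, |f' s| ≤ K * f s) (hK : 0 ≤ K) {s t : ℝ} (hs : s ∈ Icc a b)
    (ht : t ∈ Icc a b) (hfs : 0 ≤ f s) : f t ≤ f s * Real.exp (K * (b - a)) := by
  have hmono : Real.exp (K * |t - s|) ≤ Real.exp (K * (b - a)) := by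
    gcongr; exact abs_sub_le_iff.2 ⟨by linarith [ht.2, hs.1], by linarith [ht.1, hs.2]⟩
  have hrate (r : ℝ) (hr : r ∈ Ioo a b) : -(K * f r) ≤ f' r ∧ f' r ≤ K * f r :=
    abs_le.1 (hf' r hr)
  refine le_trans ?_ (mul_le_mul_of_nonneg_left hmono hfs)
  rcases le_total s t with hst | hts
  · have h := antitoneOn_mul_exp_neg_of_deriv_le hf (fun r hr => (hrate r hr).2) hs ht hst
    rw [abs_of_nonneg (sub_nonneg.2 hst)]
    calc f t = f t * Real.exp (-K * t) * Real.exp (K * t) := by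
          rw [mul_assoc, ← Real.exp_add]; simp
      _ ≤ f s * Real.exp (-K * s) * Real.exp (K * t) := by gcongr
      _ = f s * Real.exp (K * (t - s)) := by rw [mul_assoc, ← Real.exp_add]; congr 2; ring
  · -- backwards in time, the forward estimate for `-f` with rate `-K`
    have h := antitoneOn_mul_exp_neg_of_deriv_le (f := fun r => -f r) (f' := fun r => -f' r)
      (K := -K) (fun r hr => (hf r hr).neg) (fun r hr => by linarith [hrate r hr]) ht hs hts
    simp only [neg_neg, neg_mul] at h
    rw [abs_of_nonpos (sub_nonpos.2 hts)]
    calc f t = f t * Real.exp (K * t) * Real.exp (-K * t) := by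
          rw [mul_assoc, ← Real.exp_add]; simp
      _ ≤ f s * Real.exp (K * s) * Real.exp (-K * t) :=
          mul_le_mul_of_nonneg_right (by linarith) (Real.exp_pos _).le
      _ = f s * Real.exp (K * -(t - s)) := by rw [mul_assoc, ← Real.exp_add]; congr 2; ring

theorem abs_le_mul_exp_of_abs_deriv_le {c M : ℝ}
    (hf : ∀ s ∈ Icc a b, HasDerivWithinAt f (f' s) (Icc a b) s)
    (hf' : ∀ s ∈ Icc a b, |f' s| ≤ K * (f s + c)) (hK : 0 < K) {s t : ℝ} (hs : s ∈ Icc a b)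
    (hfs : f s + c ≤ M) (ht : t ∈ Icc a b) : |f t| ≤ M * Real.exp (K * (b - a)) + |c| := by
  have hnonneg (r : ℝ) (hr : r ∈ Icc a b) : 0 ≤ f r + c :=
    nonneg_of_mul_nonneg_right ((abs_nonneg _).trans (hf' r hr)) hK
  have h := le_mul_exp_of_abs_deriv_le (f := fun r => f r + c) (fun r hr => (hf r hr).add_const c)
    (fun r hr => hf' r (Ioo_subset_Icc_self hr)) hK.le hs ht (hnonneg s hs)
  have hM : (f s + c) * Real.exp (K * (b - a)) ≤ M * Real.exp (K * (b - a)) := by gcongr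
  rw [abs_le]
  constructor <;> linarith [hnonneg t ht, neg_abs_le c, le_abs_self c]

end Gronwall

theorem ContinuousOn.exists_bound_Icc_prod_closedBall {X Y : Type*} [NormedAddCommGroup X]
    [ProperSpace X] [SeminormedAddGroup Y] {f : ℝ × X → Y} {a b : ℝ}
    (hf : ContinuousOn f (Icc a b ×ˢ univ)) (r : ℝ) :
    ∃ M, ∀ t ∈ Icc a b, ∀ x, ‖x‖ ≤ r → ‖f (t, x)‖ ≤ M := by
  have hK : IsCompact (Icc a b ×ˢ Metric.closedBall (0 : X) r) :=
    isCompact_Icc.prod (isCompact_closedBall 0 r)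
  obtain ⟨M, hM⟩ := hK.exists_bound_of_continuousOn (hf.mono (prod_mono_right (subset_univ _)))
  exact ⟨M, fun t ht x hx => hM (t, x) ⟨ht, mem_closedBall_zero_iff.2 hx⟩⟩

section PartialDerivatives

variable {X : Type*} [NormedAddCommGroup X] [InnerProductSpace ℝ X] [CompleteSpace X]
  {F dtF : ℝ → X → ℝ} {gradF : ℝ → X → X} {a b : ℝ}

theorem fderivWithin_eq_coprod_of_contDiffOn (hab : a < b)
    (hF : ContDiffOn ℝ 1 (fun p : ℝ × X => F p.1 p.2) (Icc a b ×ˢ univ))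
    (hgrad : ∀ t ∈ Icc a b, ∀ x, HasGradientAt (F t) (gradF t x) x)
    (hdt : ∀ x, ∀ t ∈ Icc a b, HasDerivWithinAt (fun τ => F τ x) (dtF t x) (Icc a b) t)
    {t : ℝ} (ht : t ∈ Icc a b) (x : X) :
    fderivWithin ℝ (fun p : ℝ × X => F p.1 p.2) (Icc a b ×ˢ univ) (t, x) =
      (ContinuousLinearMap.toSpanSingleton ℝ (dtF t x)).coprod
        (InnerProductSpace.toDual ℝ X (gradF t x)) := by
  have hD := ((hF.differentiableOn one_ne_zero) (t, x) ⟨ht, mem_univ x⟩).hasFDerivWithinAt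
  refine ContinuousLinearMap.prod_ext ?_ ?_
  · have hι : HasFDerivWithinAt (fun τ : ℝ => (τ, x)) (ContinuousLinearMap.inl ℝ ℝ X)
        (Icc a b) t := (hasFDerivAt_prodMk_left t x).hasFDerivWithinAt
    have h := hD.comp t hι fun τ hτ => mk_mem_prod hτ (mem_univ x)
    rw [ContinuousLinearMap.coprod_comp_inl]
    exact (uniqueDiffOn_Icc hab t ht).eq h (hdt x t ht).hasFDerivWithinAt
  · rw [ContinuousLinearMap.coprod_comp_inr]
    exact ((hD.comp x (hasFDerivAt_prodMk_right t x).hasFDerivWithinAt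
      fun y _ => ⟨ht, mem_univ y⟩).hasFDerivAt univ_mem).unique (hgrad t ht x)

theorem hasFDerivWithinAt_coprod_of_contDiffOn (hab : a < b)
    (hF : ContDiffOn ℝ 1 (fun p : ℝ × X => F p.1 p.2) (Icc a b ×ˢ univ))
    (hgrad : ∀ t ∈ Icc a b, ∀ x, HasGradientAt (F t) (gradF t x) x)
    (hdt : ∀ x, ∀ t ∈ Icc a b, HasDerivWithinAt (fun τ => F τ x) (dtF t x) (Icc a b) t)
    {t : ℝ} (ht : t ∈ Icc a b) (x : X) :
    HasFDerivWithinAt (fun p : ℝ × X => F p.1 p.2)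
      ((ContinuousLinearMap.toSpanSingleton ℝ (dtF t x)).coprod
        (InnerProductSpace.toDual ℝ X (gradF t x))) (Icc a b ×ˢ univ) (t, x) := by
  rw [← fderivWithin_eq_coprod_of_contDiffOn hab hF hgrad hdt ht x]
  exact ((hF.differentiableOn one_ne_zero) (t, x) ⟨ht, mem_univ x⟩).hasFDerivWithinAt

theorem continuousOn_gradient_of_contDiffOn (hab : a < b)
    (hF : ContDiffOn ℝ 1 (fun p : ℝ × X => F p.1 p.2) (Icc a b ×ˢ univ))
    (hgrad : ∀ t ∈ Icc a b, ∀ x, HasGradientAt (F t) (gradF t x) x)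
    (hdt : ∀ x, ∀ t ∈ Icc a b, HasDerivWithinAt (fun τ => F τ x) (dtF t x) (Icc a b) t) :
    ContinuousOn (fun p : ℝ × X => gradF p.1 p.2) (Icc a b ×ˢ univ) := by
  have hD := (hF.continuousOn_fderivWithin ((uniqueDiffOn_Icc hab).prod uniqueDiffOn_univ)
    le_rfl).clm_comp (continuousOn_const (c := ContinuousLinearMap.inr ℝ ℝ X))
  refine ((InnerProductSpace.toDual ℝ X).symm.continuous.comp_continuousOn hD).congr
    fun p hp => ?_
  simp [fderivWithin_eq_coprod_of_contDiffOn hab hF hgrad hdt hp.1 p.2]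

end PartialDerivatives

section Energy

variable {X : Type*} [NormedAddCommGroup X] [InnerProductSpace ℝ X]
  {A B : X →L[ℝ] X} {F dtF : ℝ → X → ℝ} {ε : ℝ} {v v' : ℝ → X}

noncomputable def mechanicalEnergy (A : X →L[ℝ] X) (F : ℝ → X → ℝ) (ε : ℝ) (v v' : ℝ → X)
    (t : ℝ) : ℝ :=
  ε ^ 2 / 2 * ⟪v' t, A (v' t)⟫ + F t (v t)

theorem apply_le_mechanicalEnergy (hA : ∀ x, 0 ≤ ⟪x, A x⟫) (t : ℝ) :
    F t (v t) ≤ mechanicalEnergy A F ε v v' t :=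
  le_add_of_nonneg_left (mul_nonneg (by positivity) (hA _))

theorem hasDerivWithinAt_mechanicalEnergy [CompleteSpace X] {gradF : ℝ → X → X} {v'' : ℝ → X}
    {s : Set ℝ} {t : ℝ} (hA : ∀ x y, ⟪A x, y⟫ = ⟪x, A y⟫)
    (hF : HasFDerivWithinAt (fun p : ℝ × X => F p.1 p.2)
      ((ContinuousLinearMap.toSpanSingleton ℝ (dtF t (v t))).coprod
        (InnerProductSpace.toDual ℝ X (gradF t (v t)))) (s ×ˢ univ) (t, v t))
    (hv : HasDerivWithinAt v (v' t) s t) (hv' : HasDerivWithinAt v' (v'' t) s t)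
    (hode : ε ^ 2 • A (v'' t) + ε • B (v' t) + gradF t (v t) = 0) :
    HasDerivWithinAt (mechanicalEnergy A F ε v v') (dtF t (v t) - ε * ⟪v' t, B (v' t)⟫) s t := by
  have hkin := (hv'.inner ℝ (A.hasFDerivAt.comp_hasDerivWithinAt t hv')).const_mul (ε ^ 2 / 2)
  have hpot := hF.comp_hasDerivWithinAt t ((hasDerivWithinAt_id t s).prodMk hv)
    fun τ hτ => mk_mem_prod hτ (mem_univ _)
  -- the equation of motion tested against the velocity
  have hpower := congrArg (⟪·, v' t⟫) hode
  simp only [inner_add_left, real_inner_smul_left, inner_zero_left] at hpower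
  refine (hkin.add hpot).congr_deriv ?_
  simp only [ContinuousLinearMap.coprod_apply, ContinuousLinearMap.toSpanSingleton_apply,
    InnerProductSpace.toDual_apply_apply, Function.comp_apply, smul_eq_mul, one_mul]
  rw [real_inner_comm (A (v'' t)), ← hA, real_inner_comm (B (v' t))]
  linarith

theorem mechanicalEnergy_le_of_norm_le {R MF t : ℝ} (hε : 0 ≤ ε) (hv : ‖v t‖ ≤ R)
    (hv' : ε * ‖v' t‖ ≤ R) (hF : ∀ x, ‖x‖ ≤ R → F t x ≤ MF) :
    mechanicalEnergy A F ε v v' t ≤ ‖A‖ * R ^ 2 / 2 + MF := by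
  have hkin : ⟪v' t, A (v' t)⟫ ≤ ‖A‖ * ‖v' t‖ ^ 2 :=
    calc ⟪v' t, A (v' t)⟫ ≤ ‖v' t‖ * ‖A (v' t)‖ := real_inner_le_norm _ _
      _ ≤ ‖v' t‖ * (‖A‖ * ‖v' t‖) := by gcongr; exact A.le_opNorm _
      _ = ‖A‖ * ‖v' t‖ ^ 2 := by ring
  have hR : (ε * ‖v' t‖) ^ 2 ≤ R ^ 2 := pow_le_pow_left₀ (by positivity) hv' 2
  calc mechanicalEnergy A F ε v v' t ≤ ε ^ 2 / 2 * (‖A‖ * ‖v' t‖ ^ 2) + MF :=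
        add_le_add (by gcongr) (hF _ hv)
    _ = ‖A‖ / 2 * (ε * ‖v' t‖) ^ 2 + MF := by ring
    _ ≤ ‖A‖ / 2 * R ^ 2 + MF := by gcongr
    _ = ‖A‖ * R ^ 2 / 2 + MF := by ring

theorem mechanicalEnergy_add_le {T c C M₀ : ℝ} (hε : 0 ≤ ε) (hC : 0 ≤ C)
    (hA : ∀ x, 0 ≤ ⟪x, A x⟫) (hB : ∀ x, 0 ≤ ⟪x, B x⟫)
    (hE : ∀ t ∈ Icc 0 T, HasDerivWithinAt (mechanicalEnergy A F ε v v')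
      (dtF t (v t) - ε * ⟪v' t, B (v' t)⟫) (Icc 0 T) t)
    (hdt : ∀ t ∈ Icc 0 T, dtF t (v t) ≤ C * (F t (v t) + c))
    (h₀ : 0 ≤ mechanicalEnergy A F ε v v' 0 + c) (hM₀ : mechanicalEnergy A F ε v v' 0 ≤ M₀)
    {t : ℝ} (ht : t ∈ Icc 0 T) :
    mechanicalEnergy A F ε v v' t + c ≤ (M₀ + c) * Real.exp (C * T) := by
  have hrate (s : ℝ) (hs : s ∈ Ioo 0 T) :
      dtF s (v s) - ε * ⟪v' s, B (v' s)⟫ ≤ C * (mechanicalEnergy A F ε v v' s + c) := by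
    have hFE : F s (v s) ≤ mechanicalEnergy A F ε v v' s := apply_le_mechanicalEnergy hA s
    nlinarith [hdt s (Ioo_subset_Icc_self hs), mul_nonneg hε (hB (v' s)),
      mul_le_mul_of_nonneg_left hFE hC]
  calc mechanicalEnergy A F ε v v' t + c
      ≤ (mechanicalEnergy A F ε v v' 0 + c) * Real.exp (C * (T - 0)) :=
        le_mul_exp_of_deriv_le (fun s hs => (hE s hs).add_const c) hrate hC h₀ ht
    _ ≤ (M₀ + c) * Real.exp (C * T) := by rw [sub_zero]; gcongr

theorem mul_norm_le_sqrt_of_mechanicalEnergy_le {c cA M t : ℝ} (hcA : 0 < cA)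
    (hA : ∀ x, cA * ‖x‖ ^ 2 ≤ ⟪x, A x⟫) (hF : 0 ≤ F t (v t) + c)
    (hE : mechanicalEnergy A F ε v v' t + c ≤ M) : ε * ‖v' t‖ ≤ √(2 * M / cA) :=
  mul_norm_le_sqrt_of_coercive hcA hA (by unfold mechanicalEnergy at hE; linarith)

theorem mul_integral_sq_norm_le {E d : ℝ → ℝ} {a b cB K : ℝ} (hab : a ≤ b) (hcB : 0 < cB)
    (hε : 0 ≤ ε) (hB : ∀ x, cB * ‖x‖ ^ 2 ≤ ⟪x, B x⟫) (hv' : ContinuousOn v' (Icc a b))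
    (hE : ∀ t ∈ Icc a b, HasDerivWithinAt E (d t - ε * ⟪v' t, B (v' t)⟫) (Icc a b) t)
    (hd : ∀ t ∈ Icc a b, d t ≤ K) :
    ε * ∫ r in a..b, ‖v' r‖ ^ 2 ≤ (E a - E b + K * (b - a)) / cB := by
  have hint := intervalIntegral.integral_le_sub_of_hasDeriv_right_of_le (g := fun r => K * r - E r)
    (φ := fun r => ε * cB * ‖v' r‖ ^ 2) hab
    (((continuous_const.mul continuous_id).continuousOn).sub
      fun t ht => (hE t ht).continuousWithinAt)
    (fun t ht => ((((hasDerivAt_id t).const_mul K).sub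
      ((hE t (Ioo_subset_Icc_self ht)).hasDerivAt (Icc_mem_nhds ht.1 ht.2))).hasDerivWithinAt))
    ((continuousOn_const.mul (hv'.norm.pow 2)).integrableOn_Icc)
    (fun t ht => by
      have := hd t (Ioo_subset_Icc_self ht)
      nlinarith [mul_le_mul_of_nonneg_left (hB (v' t)) hε])
  rw [intervalIntegral.integral_const_mul] at hint
  rw [le_div_iff₀ hcB]
  linarith

end Energy

theorem apriori_bounds_i_iv
    {X : Type*} [NormedAddCommGroup X] [InnerProductSpace ℝ X] [FiniteDimensional ℝ X]
    (A B : X →L[ℝ] X)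
    (hAsymm : ∀ x y : X, ⟪A x, y⟫ = ⟪x, A y⟫)
    (hApos : ∀ x : X, x ≠ 0 → 0 < ⟪x, A x⟫)
    (hBpos : ∀ x : X, x ≠ 0 → 0 < ⟪x, B x⟫)
    (T : ℝ) (hT : 0 < T)
    (F dtF : ℝ → X → ℝ) (gradF : ℝ → X → X)
    -- (F0): F is C¹ on [0,T] × X
    (hF0 : ContDiffOn ℝ 1 (fun p : ℝ × X => F p.1 p.2) (Set.Icc 0 T ×ˢ Set.univ))
    (hgradF : ∀ t ∈ Set.Icc 0 T, ∀ x : X, HasGradientAt (F t) (gradF t x) x)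
    (hdtF : ∀ x : X, ∀ t ∈ Set.Icc 0 T,
      HasDerivWithinAt (fun τ => F τ x) (dtF t x) (Set.Icc 0 T) t)
    -- (F1): sublevel sets of u ↦ sup_t |F(t,u)| are bounded
    (hF1 : ∀ ρ > (0 : ℝ), Bornology.IsBounded {x : X | ∀ t ∈ Set.Icc 0 T, |F t x| ≤ ρ})
    -- (F2): power control
    (C₁ C₂ : ℝ) (hC₁ : 0 < C₁)
    (hF2 : ∀ t ∈ Set.Icc 0 T, ∀ x : X, |dtF t x| ≤ C₁ * F t x + C₂)
    -- the family of solutions u_ε, with derivatives u'_ε, u''_ε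
    (u u' u'' : ℝ → ℝ → X)
    (hu' : ∀ ε > (0 : ℝ), ∀ t ∈ Set.Icc 0 T, HasDerivWithinAt (u ε) (u' ε t) (Set.Icc 0 T) t)
    (hu'' : ∀ ε > (0 : ℝ), ∀ t ∈ Set.Icc 0 T, HasDerivWithinAt (u' ε) (u'' ε t) (Set.Icc 0 T) t)
    (hode : ∀ ε > (0 : ℝ), ∀ t ∈ Set.Icc 0 T,
      ε ^ 2 • A (u'' ε t) + ε • B (u' ε t) + gradF t (u ε t) = 0)
    -- uniformly bounded initial data
    (R : ℝ)
    (hinit : ∀ ε > (0 : ℝ), ‖u ε 0‖ ≤ R ∧ ε * ‖u' ε 0‖ ≤ R) :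
    ∃ C > (0 : ℝ), ∀ ε > (0 : ℝ), ∀ t ∈ Set.Icc 0 T,
      ‖u ε t‖ ≤ C ∧
      ε * ‖u' ε t‖ ≤ C ∧
      ε ^ 2 * ‖u'' ε t‖ ≤ C ∧
      ε * (∫ r in (0 : ℝ)..T, ‖u' ε r‖ ^ 2) ≤ C := by
  obtain ⟨cA, hcA, hcoA⟩ := exists_pos_mul_sq_norm_le_inner_apply A hApos
  obtain ⟨cB, hcB, hcoB⟩ := exists_pos_mul_sq_norm_le_inner_apply B hBpos
  have hAnn (x : X) : 0 ≤ ⟪x, A x⟫ := (by positivity : 0 ≤ cA * ‖x‖ ^ 2).trans (hcoA x)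
  have hBnn (x : X) : 0 ≤ ⟪x, B x⟫ := (by positivity : 0 ≤ cB * ‖x‖ ^ 2).trans (hcoB x)
  -- with `c = C₂ / C₁`, (F2) reads `|∂ₜ(F + c)| ≤ C₁ (F + c)`; in particular `F + c ≥ 0`
  set c := C₂ / C₁
  have hdt (t : ℝ) (ht : t ∈ Icc 0 T) (x : X) : |dtF t x| ≤ C₁ * (F t x + c) := by
    rw [mul_add, mul_div_cancel₀ _ hC₁.ne']; exact hF2 t ht x
  have hFc (t : ℝ) (ht : t ∈ Icc 0 T) (x : X) : 0 ≤ F t x + c :=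
    nonneg_of_mul_nonneg_right ((abs_nonneg _).trans (hdt t ht x)) hC₁
  set E := fun ε => mechanicalEnergy A F ε (u ε) (u' ε)
  have hFE (ε t : ℝ) : F t (u ε t) ≤ E ε t := apply_le_mechanicalEnergy hAnn t
  have hEc (ε t : ℝ) (ht : t ∈ Icc 0 T) : 0 ≤ E ε t + c := by linarith [hFc t ht (u ε t), hFE ε t]
  have hE (ε : ℝ) (hε : 0 < ε) (t : ℝ) (ht : t ∈ Icc 0 T) : HasDerivWithinAt (E ε)
      (dtF t (u ε t) - ε * ⟪u' ε t, B (u' ε t)⟫) (Icc 0 T) t :=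
    hasDerivWithinAt_mechanicalEnergy hAsymm (hasFDerivWithinAt_coprod_of_contDiffOn hT hF0
      hgradF hdtF ht _) (hu' ε hε t ht) (hu'' ε hε t ht) (hode ε hε t ht)
  obtain ⟨MF, hMF⟩ := hF0.continuousOn.exists_bound_Icc_prod_closedBall R
  set M₀ := ‖A‖ * R ^ 2 / 2 + MF
  have hE₀ (ε : ℝ) (hε : 0 < ε) : E ε 0 ≤ M₀ :=
    mechanicalEnergy_le_of_norm_le hε.le (hinit ε hε).1 (hinit ε hε).2 fun x hx =>
      (le_abs_self _).trans (hMF 0 ⟨le_rfl, hT.le⟩ x hx)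
  set M := (M₀ + c) * Real.exp (C₁ * T)
  have hEM (ε : ℝ) (hε : 0 < ε) (t : ℝ) (ht : t ∈ Icc 0 T) : E ε t + c ≤ M :=
    mechanicalEnergy_add_le hε.le hC₁.le hAnn hBnn (hE ε hε)
      (fun s hs => (le_abs_self _).trans (hdt s hs _)) (hEc ε 0 ⟨le_rfl, hT.le⟩) (hE₀ ε hε) ht
  have hFM (ε : ℝ) (hε : 0 < ε) (t : ℝ) (ht : t ∈ Icc 0 T) : F t (u ε t) + c ≤ M := by
    linarith [hFE ε t, hEM ε hε t ht]
  set ρ := max 1 (M * Real.exp (C₁ * T) + |c|)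
  obtain ⟨Cu, hCu⟩ := (hF1 ρ (lt_max_of_lt_left one_pos)).subset_closedBall 0
  have hu (ε : ℝ) (hε : 0 < ε) (t : ℝ) (ht : t ∈ Icc 0 T) : ‖u ε t‖ ≤ Cu := by
    refine mem_closedBall_zero_iff.1 (hCu fun s hs => le_max_of_le_right ?_)
    simpa using abs_le_mul_exp_of_abs_deriv_le (hdtF (u ε t)) (fun r hr => hdt r hr _) hC₁ ht
      (hFM ε hε t ht) hs
  set Cv := √(2 * M / cA)
  have hv (ε : ℝ) (hε : 0 < ε) (t : ℝ) (ht : t ∈ Icc 0 T) : ε * ‖u' ε t‖ ≤ Cv :=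
    mul_norm_le_sqrt_of_mechanicalEnergy_le hcA hcoA (hFc t ht _) (hEM ε hε t ht)
  obtain ⟨Mg, hMg⟩ :=
    (continuousOn_gradient_of_contDiffOn hT hF0 hgradF hdtF).exists_bound_Icc_prod_closedBall Cu
  set Cw := (‖B‖ * Cv + Mg) / cA
  have hw (ε : ℝ) (hε : 0 < ε) (t : ℝ) (ht : t ∈ Icc 0 T) : ε ^ 2 * ‖u'' ε t‖ ≤ Cw :=
    sq_mul_norm_le_of_add_add_eq_zero hcA hcoA hε.le (hode ε hε t ht) (hv ε hε t ht)
      (hMg t ht _ (hu ε hε t ht))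
  set Cq := (M₀ + c + C₁ * M * T) / cB
  have hq (ε : ℝ) (hε : 0 < ε) : ε * ∫ r in (0 : ℝ)..T, ‖u' ε r‖ ^ 2 ≤ Cq := by
    have hdtM (t : ℝ) (ht : t ∈ Icc 0 T) : dtF t (u ε t) ≤ C₁ * M :=
      (le_abs_self _).trans ((hdt t ht _).trans (by gcongr; exact hFM ε hε t ht))
    refine (mul_integral_sq_norm_le hT.le hcB hε.le hcoB
      (fun t ht => (hu'' ε hε t ht).continuousWithinAt) (hE ε hε) hdtM).trans ?_
    rw [sub_zero]
    exact div_le_div_of_nonneg_right (by linarith [hE₀ ε hε, hEc ε T ⟨hT.le, le_rfl⟩]) hcB.le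
  refine ⟨max 1 (max (max Cu Cv) (max Cw Cq)), lt_max_of_lt_left one_pos, fun ε hε t ht =>
    ⟨(hu ε hε t ht).trans ?_, (hv ε hε t ht).trans ?_, (hw ε hε t ht).trans ?_,
      (hq ε hε).trans ?_⟩⟩ <;> simp
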